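/- arXiv:1504.06904 — 7 statements merged into one kernel-verified Lean document; each statement's English description precedes it below -/
import Mathlib

section
/- For every α > 0 and every n ≥ 1, u_n(α) = (α + 1) · ∑_{i=0}^{n−1} u_i(α+1) · u_{n−1−i}(α), and u_0(α) = 1. -/
noncomputable def jacobiM (α : ℝ) (N : ℕ) : Matrix (Fin N) (Fin N) ℝ := fun i j =>
  if (i : ℕ) + 1 = (j : ℕ) then Real.sqrt (α + (i : ℕ) + 1)
  else if (j : ℕ) + 1 = (i : ℕ) then Real.sqrt (α + (j : ℕ) + 1)
  else 0

noncomputable def u (α : ℝ) (n : ℕ) : ℝ := ((jacobiM α (n + 1)) ^ (2 * n)) 0 0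

/-- Sum over walks of length `m` on ℕ from `a` to `b`, where the edge `(k,k+1)`
has weight `w k`. -/
noncomputable def walkSum (w : ℕ → ℝ) : ℕ → ℕ → ℕ → ℝ
  | 0, a, b => if a = b then 1 else 0
  | m+1, 0, b => w 0 * walkSum w m 1 b
  | m+1, a+1, b => w (a+1) * walkSum w m (a+2) b + w a * walkSum w m a b

lemma walkSum_eq_zero_of_lt (w : ℕ → ℝ) :
    ∀ m a b : ℕ, a + m < b → walkSum w m a b = 0 := by
  intro m
  induction m with
  | zero => intro a b h; simp only [walkSum]; rw [if_neg (by omega)]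
  | succ m ih =>
    intro a b h
    match a with
    | 0 => simp only [walkSum]; rw [ih 1 b (by omega)]; ring
    | a+1 =>
      simp only [walkSum]
      rw [ih (a+2) b (by omega), ih a b (by omega)]; ring

lemma walkSum_eq_zero_of_gt (w : ℕ → ℝ) :
    ∀ m a b : ℕ, b + m < a → walkSum w m a b = 0 := by
  intro m
  induction m with
  | zero => intro a b h; simp only [walkSum]; rw [if_neg (by omega)]
  | succ m ih =>
    intro a b h
    match a with
    | 0 => omega
    | a+1 =>
      simp only [walkSum]
      rw [ih a b (by omega)]
      by_cases h2 : b + m < a + 2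
      · rw [ih (a+2) b h2]; ring
      · exfalso; omega

lemma walkSum_eq_zero_of_odd (w : ℕ → ℝ) :
    ∀ m a b : ℕ, (m + a + b) % 2 = 1 → walkSum w m a b = 0 := by
  intro m
  induction m with
  | zero =>
    intro a b h
    simp only [walkSum]
    rw [if_neg (by omega)]
  | succ m ih =>
    intro a b h
    match a with
    | 0 => simp only [walkSum]; rw [ih 1 b (by omega)]; ring
    | a+1 =>
      simp only [walkSum]
      rw [ih (a+2) b (by omega), ih a b (by omega)]; ring

/-- First-passage decomposition: a walk from `k+1` to `0` first hits `0` at some time;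
before that it stays `≥ 1`, which corresponds to a shifted-weight walk. -/
lemma walkSum_renewal (w : ℕ → ℝ) :
    ∀ m k : ℕ, walkSum w m (k+1) 0 =
      ∑ i ∈ Finset.range m,
        w 0 * walkSum (fun j => w (j+1)) i k 0 * walkSum w (m-1-i) 0 0 := by
  intro m
  induction m with
  | zero =>
    intro k
    simp [walkSum]
  | succ m ih =>
    intro k
    match k with
    | 0 =>
      show w 1 * walkSum w m 2 0 + w 0 * walkSum w m 0 0 = _
      rw [Finset.sum_range_succ']
      have h0 : w 0 * walkSum (fun j => w (j+1)) 0 0 0 * walkSum w (m+1-1-0) 0 0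
          = w 0 * walkSum w m 0 0 := by
        simp [walkSum]
      rw [h0, ih 1, Finset.mul_sum]
      congr 1
      apply Finset.sum_congr rfl
      intro i hi
      have h1 : walkSum (fun j => w (j+1)) (i+1) 0 0
          = w 1 * walkSum (fun j => w (j+1)) i 1 0 := by
        show (fun j => w (j+1)) 0 * _ = _
        norm_num
      rw [h1]
      have : m + 1 - 1 - (i + 1) = m - 1 - i := by omega
      rw [this]; ring
    | k+1 =>
      show w (k+2) * walkSum w m (k+3) 0 + w (k+1) * walkSum w m (k+1) 0 = _
      rw [Finset.sum_range_succ']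
      have h0 : w 0 * walkSum (fun j => w (j+1)) 0 (k+1) 0 * walkSum w (m+1-1-0) 0 0
          = 0 := by
        simp [walkSum]
      rw [h0, add_zero, ih (k+2), ih k, Finset.mul_sum, Finset.mul_sum,
        ← Finset.sum_add_distrib]
      apply Finset.sum_congr rfl
      intro i hi
      have h1 : walkSum (fun j => w (j+1)) (i+1) (k+1) 0
          = w (k+2) * walkSum (fun j => w (j+1)) i (k+2) 0
            + w (k+1) * walkSum (fun j => w (j+1)) i k 0 := by
        show (fun j => w (j+1)) (k+1) * _ + (fun j => w (j+1)) k * _ = _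
        norm_num
      rw [h1]
      have : m + 1 - 1 - (i + 1) = m - 1 - i := by omega
      rw [this]; ring

lemma jacobi_pow_apply (α : ℝ) (N : ℕ) :
    ∀ m : ℕ, ∀ a b : Fin N, (a : ℕ) + (b : ℕ) + m + 2 ≤ 2 * N →
      (jacobiM α N ^ m) a b
        = walkSum (fun k : ℕ => Real.sqrt (α + k + 1)) m (a : ℕ) (b : ℕ) := by
  intro m
  induction m with
  | zero =>
    intro a b _
    simp only [pow_zero, Matrix.one_apply, walkSum]
    by_cases h : a = b
    · rw [if_pos h, if_pos (by rw [h])]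
    · rw [if_neg h, if_neg (fun hv => h (Fin.ext hv))]
  | succ m ih =>
    intro a b hle
    set w : ℕ → ℝ := fun k : ℕ => Real.sqrt (α + k + 1) with hw
    rw [pow_succ', Matrix.mul_apply]
    have split : ∀ k : Fin N, jacobiM α N a k * (jacobiM α N ^ m) k b
        = (if (a : ℕ) + 1 = (k : ℕ) then w a * (jacobiM α N ^ m) k b else 0)
          + (if (k : ℕ) + 1 = (a : ℕ) then w k * (jacobiM α N ^ m) k b else 0) := by
      intro k
      simp only [jacobiM, hw]
      by_cases h1 : (a : ℕ) + 1 = (k : ℕ)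
      · have h2 : ¬ ((k : ℕ) + 1 = (a : ℕ)) := by omega
        simp [h1, h2]
      · by_cases h2 : (k : ℕ) + 1 = (a : ℕ) <;> simp [h1, h2]
    rw [Finset.sum_congr rfl (fun k _ => split k), Finset.sum_add_distrib]
    -- the "up" sum
    have hup : (∑ k : Fin N, if (a : ℕ) + 1 = (k : ℕ) then w a * (jacobiM α N ^ m) k b else 0)
        = w a * walkSum w m ((a : ℕ) + 1) (b : ℕ) := by
      by_cases h1 : (a : ℕ) + 1 < N
      · have : ∀ k : Fin N,
            (if (a : ℕ) + 1 = (k : ℕ) then w a * (jacobiM α N ^ m) k b else 0)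
              = (if (⟨(a : ℕ) + 1, h1⟩ : Fin N) = k then w a * (jacobiM α N ^ m) k b else 0) := by
          intro k
          congr 1
          simp [Fin.ext_iff]
        rw [Finset.sum_congr rfl (fun k _ => this k), Finset.sum_ite_eq]
        simp only [Finset.mem_univ, if_pos]
        rw [ih ⟨(a : ℕ) + 1, h1⟩ b (by simp; omega)]
      · have hz : ∀ k : Fin N,
            (if (a : ℕ) + 1 = (k : ℕ) then w a * (jacobiM α N ^ m) k b else 0) = 0 := by
          intro k
          rw [if_neg]
          have := k.isLt
          omega
        rw [Finset.sum_congr rfl (fun k _ => hz k), Finset.sum_const_zero]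
        rw [walkSum_eq_zero_of_gt]
        · ring
        · have := a.isLt
          have := b.isLt
          omega
    rw [hup]
    -- the "down" sum
    rcases hav : (a : ℕ) with _ | a'
    · have hz : ∀ k : Fin N,
          (if (k : ℕ) + 1 = 0 then w k * (jacobiM α N ^ m) k b else 0) = 0 := by
        intro k; rw [if_neg (by omega)]
      rw [Finset.sum_congr rfl (fun k _ => hz k), Finset.sum_const_zero]
      show w 0 * walkSum w m (0 + 1) (b : ℕ) + 0 = walkSum w (m + 1) 0 (b : ℕ)
      simp [walkSum]
    · have ha' : a' < N := by
        have h := a.isLt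
        omega
      have key : ∀ k : Fin N,
          (if (k : ℕ) + 1 = a' + 1 then w k * (jacobiM α N ^ m) k b else 0)
            = (if (⟨a', ha'⟩ : Fin N) = k then w k * (jacobiM α N ^ m) k b else 0) := by
        intro k
        apply if_congr _ rfl rfl
        simp only [Fin.ext_iff, Fin.val_mk]
        omega
      rw [Finset.sum_congr rfl (fun k _ => key k), Finset.sum_ite_eq]
      simp only [Finset.mem_univ, if_pos]
      have hb := b.isLt
      rw [ih ⟨a', ha'⟩ b (by simp only [Fin.val_mk]; omega)]
      show w (a' + 1) * walkSum w m (a' + 1 + 1) (b : ℕ) + w a' * walkSum w m a' (b : ℕ)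
        = walkSum w (m + 1) (a' + 1) (b : ℕ)
      simp [walkSum]

lemma sum_range_even (g : ℕ → ℝ) (h : ∀ i, i % 2 = 1 → g i = 0) :
    ∀ n : ℕ, ∑ i ∈ Finset.range (2 * n + 1), g i = ∑ i ∈ Finset.range (n + 1), g (2 * i) := by
  intro n
  induction n with
  | zero => simp
  | succ n ih =>
    have e1 : 2 * (n + 1) + 1 = (2 * n + 1) + 1 + 1 := by ring
    rw [e1, Finset.sum_range_succ, Finset.sum_range_succ, ih,
      Finset.sum_range_succ (fun i => g (2 * i)) (n + 1)]
    rw [h (2 * n + 1) (by omega)]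
    have : 2 * n + 1 + 1 = 2 * (n + 1) := by ring
    rw [this]
    ring

theorem u_rec_shift (α : ℝ) (hα : 0 < α) :
    (∀ n : ℕ, 1 ≤ n →
      u α n = (α + 1) * ∑ i ∈ Finset.range n, u (α + 1) i * u α (n - 1 - i)) ∧
    u α 0 = 1 := by
  set w : ℕ → ℝ := fun k : ℕ => Real.sqrt (α + k + 1) with hw
  have hshift : (fun j => w (j + 1)) = (fun k : ℕ => Real.sqrt ((α + 1) + k + 1)) := by
    funext j
    simp only [hw]
    congr 1
    push_cast
    ring
  have hu : ∀ (β : ℝ) (k : ℕ),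
      u β k = walkSum (fun j : ℕ => Real.sqrt (β + j + 1)) (2 * k) 0 0 := by
    intro β k
    have := jacobi_pow_apply β (k + 1) (2 * k) 0 0 (by simp; omega)
    simpa [u] using this
  constructor
  · intro n hn
    obtain ⟨n', rfl⟩ : ∃ n', n = n' + 1 := ⟨n - 1, by omega⟩
    rw [hu α (n' + 1)]
    have e1 : 2 * (n' + 1) = (2 * n' + 1) + 1 := by ring
    rw [e1]
    show w 0 * walkSum w (2 * n' + 1) 1 0 = _
    rw [show (1 : ℕ) = 0 + 1 from rfl, walkSum_renewal w (2 * n' + 1) 0, Finset.mul_sum]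
    have hter : ∀ i ∈ Finset.range (2 * n' + 1),
        w 0 * (w 0 * walkSum (fun j => w (j + 1)) i 0 0 * walkSum w (2 * n' + 1 - 1 - i) 0 0)
          = (α + 1) * (walkSum (fun j => w (j + 1)) i 0 0 * walkSum w (2 * n' - i) 0 0) := by
      intro i _
      have hww : w 0 * w 0 = α + 1 := by
        have h0 : w 0 = Real.sqrt (α + 1) := by simp [hw]
        rw [h0, Real.mul_self_sqrt (by linarith)]
      have h2 : 2 * n' + 1 - 1 - i = 2 * n' - i := by omega
      rw [h2, ← hww]
      ring
    rw [Finset.sum_congr rfl hter, ← Finset.mul_sum]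
    congr 1
    have hodd : ∀ i, i % 2 = 1 →
        walkSum (fun j => w (j + 1)) i 0 0 * walkSum w (2 * n' - i) 0 0 = 0 := by
      intro i hi
      rw [walkSum_eq_zero_of_odd _ i 0 0 (by omega)]
      ring
    rw [sum_range_even _ hodd n']
    apply Finset.sum_congr rfl
    intro i hi
    have hi' : i ≤ n' := by
      simpa [Nat.lt_succ_iff] using hi
    have h1 : walkSum (fun j => w (j + 1)) (2 * i) 0 0 = u (α + 1) i := by
      rw [hshift, hu (α + 1) i]
    have h2 : walkSum w (2 * n' - 2 * i) 0 0 = u α (n' + 1 - 1 - i) := by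
      have e : 2 * n' - 2 * i = 2 * (n' + 1 - 1 - i) := by omega
      rw [e, hu α (n' + 1 - 1 - i), hw]
    rw [h1, h2]
  · simp [u, Matrix.one_apply]
end

section
/- For every α > 0 and every n ≥ 1, u_n(α) = (2n − 1) · u_{n−1}(α) + α · ∑_{i=0}^{n−1} u_i(α) · u_{n−1−i}(α), and u_0(α) = 1. -/
open Finset Matrix

section

variable {R : Type*} {N : ℕ}

def HollowTridiagonal [Zero R] (A : Matrix (Fin N) (Fin N) R) : Prop :=
  ∀ i j : Fin N, (i : ℕ) + 1 ≠ j → (j : ℕ) + 1 ≠ i → A i j = 0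

namespace HollowTridiagonal

variable [Semiring R] {A : Matrix (Fin N) (Fin N) R}

theorem pow_apply_eq_zero_of_add_lt (hA : HollowTridiagonal A) {m : ℕ} {i k : Fin N}
    (h : (i : ℕ) + m < k ∨ (k : ℕ) + m < i) : (A ^ m) i k = 0 := by
  induction m generalizing i with
  | zero => exact one_apply_ne (by rintro rfl; omega)
  | succ m ih =>
    rw [pow_succ', mul_apply]
    refine sum_eq_zero fun t _ => ?_
    by_cases hit : (i : ℕ) + 1 = t ∨ (t : ℕ) + 1 = i
    · rw [ih (by omega), mul_zero]
    · rw [hA i t (by omega) (by omega), zero_mul]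

theorem pow_apply_eq_zero_of_odd (hA : HollowTridiagonal A) {m : ℕ} {i k : Fin N}
    (h : Odd (m + i + k)) : (A ^ m) i k = 0 := by
  rw [Nat.odd_iff] at h
  induction m generalizing i with
  | zero => exact one_apply_ne (by rintro rfl; omega)
  | succ m ih =>
    rw [pow_succ', mul_apply]
    refine sum_eq_zero fun t _ => ?_
    by_cases hit : (i : ℕ) + 1 = t ∨ (t : ℕ) + 1 = i
    · rw [ih (by omega), mul_zero]
    · rw [hA i t (by omega) (by omega), zero_mul]

theorem submatrix_castLE_pow_apply (hA : HollowTridiagonal A) {n : ℕ} (hn : n ≤ N) {m : ℕ}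
    {i k : Fin n} (h : (i : ℕ) + k + m < 2 * n) :
    (A.submatrix (Fin.castLE hn) (Fin.castLE hn) ^ m) i k =
      (A ^ m) (Fin.castLE hn i) (Fin.castLE hn k) := by
  induction m generalizing i with
  | zero => simp [one_apply]
  | succ m ih =>
    rw [pow_succ', pow_succ', mul_apply, mul_apply]
    refine Fintype.sum_of_injective _ (Fin.castLE_injective hn) _ _ (fun t ht => ?_) (fun t => ?_)
    · have htn : n ≤ t := by
        by_contra! htn
        exact ht ⟨⟨t, htn⟩, rfl⟩
      by_cases hit : (i : ℕ) + 1 = t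
      · rw [hA.pow_apply_eq_zero_of_add_lt (by simp; omega), mul_zero]
      · rw [hA _ t (by simpa using hit) (by simp; omega), zero_mul]
    · by_cases hit : (i : ℕ) + 1 = t ∨ (t : ℕ) + 1 = i
      · rw [submatrix_apply, ih (by omega)]
      · rw [submatrix_apply, hA _ _ (by simp; omega) (by simp; omega), zero_mul, zero_mul]

end HollowTridiagonal

end

theorem pow_lie_eq_sum {R : Type*} [Ring R] (a b : R) (m : ℕ) :
    ⁅a ^ m, b⁆ = ∑ j ∈ range m, a ^ j * ⁅a, b⁆ * a ^ (m - 1 - j) := by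
  induction m with
  | zero => simp [Ring.lie_def]
  | succ m ih =>
    calc ⁅a ^ (m + 1), b⁆ = a * ⁅a ^ m, b⁆ + ⁅a, b⁆ * a ^ m := by
          simp only [Ring.lie_def, pow_succ']; noncomm_ring
      _ = _ := by
        rw [ih, mul_sum, sum_range_succ']
        congr 1
        · refine sum_congr rfl fun j _ => ?_
          rw [show m + 1 - 1 - (j + 1) = m - 1 - j by omega, pow_succ']
          simp only [mul_assoc]
        · simp

theorem sum_range_two_mul_add_one_of_odd_eq_zero {M : Type*} [AddCommMonoid M] (f : ℕ → M)
    (hf : ∀ i, f (2 * i + 1) = 0) (k : ℕ) :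
    ∑ j ∈ range (2 * k + 1), f j = ∑ i ∈ range (k + 1), f (2 * i) := by
  induction k with
  | zero => simp
  | succ k ih =>
    rw [sum_range_succ _ (k + 1), ← ih, show 2 * (k + 1) + 1 = 2 * k + 1 + 1 + 1 by ring,
      sum_range_succ, sum_range_succ, hf, add_zero]
    rfl

noncomputable def jacobiLower (α : ℝ) (N : ℕ) : Matrix (Fin N) (Fin N) ℝ := fun i j =>
  if (j : ℕ) + 1 = i then √(α + (j : ℕ) + 1) else 0

theorem jacobiM_eq_jacobiLower_add_transpose (α : ℝ) (N : ℕ) :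
    jacobiM α N = jacobiLower α N + (jacobiLower α N)ᵀ := by
  ext i j
  simp only [jacobiM, jacobiLower, Matrix.add_apply, transpose_apply]
  split_ifs <;> first | omega | simp

theorem jacobiM_submatrix_castLE (α : ℝ) {n N : ℕ} (hn : n ≤ N) :
    (jacobiM α N).submatrix (Fin.castLE hn) (Fin.castLE hn) = jacobiM α n := by
  ext; simp [jacobiM]

theorem hollowTridiagonal_jacobiM (α : ℝ) (N : ℕ) : HollowTridiagonal (jacobiM α N) :=
  fun i j h₁ h₂ => by simp [jacobiM, h₁, h₂]

theorem jacobiM_pow_two_mul_apply_zero (α : ℝ) {i n : ℕ} (hi : i ≤ n) :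
    (jacobiM α (n + 1) ^ (2 * i)) 0 0 = u α i := by
  have hin : i + 1 ≤ n + 1 := by omega
  have h := (hollowTridiagonal_jacobiM α (n + 1)).submatrix_castLE_pow_apply hin
    (m := 2 * i) (i := 0) (k := 0) (by simp)
  rw [jacobiM_submatrix_castLE] at h
  simpa [u] using h.symm

theorem sum_range_jacobiM_pow_mul_pow_apply_zero (α : ℝ) {k n : ℕ} (hk : k ≤ n) :
    ∑ j ∈ range (2 * k + 1), (jacobiM α (n + 1) ^ j) 0 0 * (jacobiM α (n + 1) ^ (2 * k - j)) 0 0 =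
      ∑ i ∈ range (k + 1), u α i * u α (k - i) := by
  have hM := hollowTridiagonal_jacobiM α (n + 1)
  refine (sum_range_two_mul_add_one_of_odd_eq_zero _ (fun i => ?_) k).trans
    (sum_congr rfl fun i hi => ?_)
  · rw [hM.pow_apply_eq_zero_of_odd (by simp), zero_mul]
  · rw [mem_range] at hi
    rw [show 2 * k - 2 * i = 2 * (k - i) by omega, jacobiM_pow_two_mul_apply_zero α (by omega),
      jacobiM_pow_two_mul_apply_zero α (by omega)]

variable {α : ℝ}

theorem jacobiLower_transpose_mul (hα : -1 ≤ α) (N : ℕ) :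
    (jacobiLower α N)ᵀ * jacobiLower α N =
      diagonal fun s : Fin N => if (s : ℕ) + 1 < N then α + (s : ℕ) + 1 else 0 := by
  ext s t
  by_cases hs : (s : ℕ) + 1 < N
  · rw [mul_apply, Fintype.sum_eq_single ⟨s + 1, hs⟩ fun r hr => ?_]
    · by_cases hst : s = t
      · subst hst
        simp [jacobiLower, hs, ← sq, Real.sq_sqrt (by linarith : 0 ≤ α + (s : ℕ) + 1)]
      · simp [jacobiLower, hst, Ne.symm hst, Fin.val_inj]
    · simp [jacobiLower, Fin.ext_iff] at hr ⊢
      omega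
  · have hL : ∀ r, jacobiLower α N r s = 0 := fun r => if_neg (by omega)
    simp [mul_apply, hL, diagonal_apply, hs]

theorem jacobiLower_mul_transpose (hα : -1 ≤ α) (N : ℕ) :
    jacobiLower α N * (jacobiLower α N)ᵀ =
      diagonal fun s : Fin N => if 0 < (s : ℕ) then α + (s : ℕ) else 0 := by
  ext s t
  by_cases hs : 0 < (s : ℕ)
  · rw [mul_apply, Fintype.sum_eq_single ⟨s - 1, by omega⟩ fun r hr => ?_]
    · by_cases hst : s = t
      · subst hst
        have hs₁ : (1 : ℝ) ≤ (s : ℕ) := by exact_mod_cast hs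
        simp [jacobiLower, hs, Nat.sub_add_cancel hs, ← sq, add_assoc,
          Real.sq_sqrt (by linarith : 0 ≤ α + (s : ℕ))]
      · simp [jacobiLower, hst]
        omega
    · simp [jacobiLower, Fin.ext_iff] at hr ⊢
      omega
  · have hL : ∀ r, jacobiLower α N s r = 0 := fun r => if_neg (by omega)
    simp [mul_apply, hL, diagonal_apply, hs]

theorem jacobiLower_transpose_lie (hα : -1 ≤ α) (n : ℕ) :
    ⁅(jacobiLower α (n + 1))ᵀ, jacobiLower α (n + 1)⁆ =
      diagonal fun s =>
        1 + (if s = 0 then α else 0) - (if s = Fin.last n then α + n + 1 else 0) := by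
  rw [Ring.lie_def, jacobiLower_transpose_mul hα, jacobiLower_mul_transpose hα, diagonal_sub]
  congr 1
  funext s
  rcases s with ⟨s, hs⟩
  simp only [Fin.ext_iff, Fin.val_zero, Fin.val_last]
  split_ifs <;> subst_vars <;> first | omega | (push_cast; ring)

theorem mul_jacobiLower_transpose_lie_mul_apply_zero (hα : -1 ≤ α) {n : ℕ}
    (A B : Matrix (Fin (n + 1)) (Fin (n + 1)) ℝ) :
    (A * ⁅(jacobiLower α (n + 1))ᵀ, jacobiLower α (n + 1)⁆ * B) 0 0 =
      (A * B) 0 0 + α * (A 0 0 * B 0 0) -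
        (α + n + 1) * (A 0 (Fin.last n) * B (Fin.last n) 0) := by
  rw [jacobiLower_transpose_lie hα, mul_apply, mul_apply]
  simp only [mul_diagonal, mul_add, mul_sub, add_mul, sub_mul, mul_one, sum_add_distrib,
    sum_sub_distrib, mul_ite, ite_mul, mul_zero, zero_mul, sum_ite_eq', mem_univ, if_true]
  ring

theorem jacobiM_pow_mul_lie_mul_pow_apply_zero (hα : -1 ≤ α) {j k : ℕ} (hj : j ≤ 2 * k) :
    (jacobiM α (k + 1 + 1) ^ j * ⁅(jacobiLower α (k + 1 + 1))ᵀ, jacobiLower α (k + 1 + 1)⁆ *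
        jacobiM α (k + 1 + 1) ^ (2 * k - j)) 0 0 =
      u α k + α * ((jacobiM α (k + 1 + 1) ^ j) 0 0 *
        (jacobiM α (k + 1 + 1) ^ (2 * k - j)) 0 0) := by
  have hM := hollowTridiagonal_jacobiM α (k + 1 + 1)
  have hcorner : (jacobiM α (k + 1 + 1) ^ j) 0 (Fin.last (k + 1)) *
      (jacobiM α (k + 1 + 1) ^ (2 * k - j)) (Fin.last (k + 1)) 0 = 0 := by
    rcases le_or_gt j k with hjk | hjk
    · rw [hM.pow_apply_eq_zero_of_add_lt (by simp; omega), zero_mul]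
    · rw [hM.pow_apply_eq_zero_of_add_lt (m := 2 * k - j) (by simp; omega), mul_zero]
  rw [mul_jacobiLower_transpose_lie_mul_apply_zero hα, hcorner, ← pow_add,
    show j + (2 * k - j) = 2 * k by omega, jacobiM_pow_two_mul_apply_zero α (by omega)]
  ring

theorem u_succ (hα : -1 ≤ α) (k : ℕ) :
    u α (k + 1) = (2 * k + 1) * u α k + α * ∑ i ∈ range (k + 1), u α i * u α (k - i) := by
  set M := jacobiM α (k + 1 + 1)
  set L := jacobiLower α (k + 1 + 1)
  have hML : M = L + Lᵀ := jacobiM_eq_jacobiLower_add_transpose α _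
  have hL0 : ∀ t, L 0 t = 0 := fun t => if_neg (by simp)
  have hlie : ⁅M, L⁆ = ⁅Lᵀ, L⁆ := by rw [hML, Ring.lie_def, Ring.lie_def]; noncomm_ring
  calc u α (k + 1) = (M ^ (2 * k + 1) * (L + Lᵀ)) 0 0 := by
        rw [← hML, ← pow_succ]; rfl
    _ = ⁅M ^ (2 * k + 1), L⁆ 0 0 := by
        simp [Ring.lie_def, mul_apply, hL0]
    _ = ∑ j ∈ range (2 * k + 1), (M ^ j * ⁅Lᵀ, L⁆ * M ^ (2 * k - j)) 0 0 := by
        rw [pow_lie_eq_sum, Matrix.sum_apply, hlie]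
        simp only [Nat.add_sub_cancel]
    _ = ∑ j ∈ range (2 * k + 1), (u α k + α * ((M ^ j) 0 0 * (M ^ (2 * k - j)) 0 0)) :=
        sum_congr rfl fun j hj =>
          jacobiM_pow_mul_lie_mul_pow_apply_zero hα (by rw [mem_range] at hj; omega)
    _ = _ := by
        rw [sum_add_distrib, sum_const, card_range, ← mul_sum,
          sum_range_jacobiM_pow_mul_pow_apply_zero α (Nat.le_succ k), nsmul_eq_mul]
        push_cast; ring

theorem u_self_convolutive_rec (α : ℝ) (hα : 0 < α) :
    (∀ n : ℕ, 1 ≤ n →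
      u α n = (2 * (n : ℝ) - 1) * u α (n - 1)
        + α * ∑ i ∈ Finset.range n, u α i * u α (n - 1 - i)) ∧
    u α 0 = 1 := by
  refine ⟨fun n hn => ?_, by simp [u]⟩
  obtain ⟨k, rfl⟩ := Nat.exists_eq_add_of_le' hn
  rw [u_succ (by linarith) k]
  push_cast
  ring
end

section
/- Let α ≥ 0 be a real number. Let (a_n)_{n≥0} be the real sequence defined by a_0 = 1 and a_n = (2n − 1) a_{n−1} + α ∑_{i=0}^{n−1} a_i a_{n−1−i} for n ≥ 1. Let (b_n)_{n≥0} be the real sequence determined by b_0 = 1 and the relations a_n = (α + 1) ∑_{i=0}^{n−1} b_i a_{n−1−i} for n ≥ 1. Then (b_n) satisfies b_0 = 1 and b_n = (2n − 1) b_{n−1} + (α + 1) ∑_{i=0}^{n−1} b_i b_{n−1−i} for all n ≥ 1. -/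
/-!
In terms of `A = ∑ aₙ Xⁿ` and `B = ∑ bₙ Xⁿ`, the recurrence for `a` is the Riccati equation
`A = 1 + X A + 2 X² A' + α X A²`, and the relation defining `b` says `A (1 - (α + 1) X B) = 1`.
Substituting `A = (1 - (α + 1) X B)⁻¹` into the Riccati equation and clearing denominators leaves
`(α + 1) X (B - (1 + X B + 2 X² B' + (α + 1) X B²)) = 0`, and `(α + 1) X` is not a zero divisor.
-/

open Finset

namespace PowerSeries

variable {R : Type*} [CommRing R]

/-- `F = riccatiRHS β F` is the generating-function form of the recurrence
`f n = (2n - 1) f (n-1) + β ∑_{i<n} f i f (n-1-i)`, `f 0 = 1`. -/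
noncomputable def riccatiRHS (β : R) (F : R⟦X⟧) : R⟦X⟧ :=
  1 + X * F + 2 * X ^ 2 * d⁄dX R F + C β * (X * (F * F))

theorem coeff_mk_mul_mk (f g : ℕ → R) (n : ℕ) :
    coeff n (mk f * mk g) = ∑ i ∈ range (n + 1), f i * g (n - i) := by
  rw [coeff_mul, Nat.sum_antidiagonal_eq_sum_range_succ_mk]
  simp only [coeff_mk]

theorem coeff_succ_two_mul_X_sq_mul_derivative (f : ℕ → R) (m : ℕ) :
    coeff (m + 1) (2 * X ^ 2 * d⁄dX R (mk f)) = 2 * m * f m := by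
  rw [mul_assoc, ← map_ofNat C 2, coeff_C_mul]
  rcases m with _ | k
  · simp [coeff_X_pow_mul']
  · rw [show k + 1 + 1 = k + 2 by ring, coeff_X_pow_mul, coeff_derivative, coeff_mk]
    push_cast
    ring

theorem coeff_succ_riccatiRHS (β : R) (f : ℕ → R) (m : ℕ) :
    coeff (m + 1) (riccatiRHS β (mk f))
      = (2 * ((m : R) + 1) - 1) * f m + β * ∑ i ∈ range (m + 1), f i * f (m - i) := by
  simp only [riccatiRHS, map_add, coeff_one, coeff_succ_X_mul, coeff_mk, coeff_C_mul,
    coeff_mk_mul_mk, coeff_succ_two_mul_X_sq_mul_derivative, Nat.succ_ne_zero, if_false]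
  ring

theorem mk_eq_riccatiRHS_iff (β : R) {f : ℕ → R} (hf0 : f 0 = 1) :
    mk f = riccatiRHS β (mk f) ↔ ∀ n : ℕ, 1 ≤ n →
      f n = (2 * (n : R) - 1) * f (n - 1) + β * ∑ i ∈ range n, f i * f (n - 1 - i) := by
  have succ_iff (m : ℕ) : coeff (m + 1) (mk f) = coeff (m + 1) (riccatiRHS β (mk f)) ↔
      f (m + 1) = (2 * ((m + 1 : ℕ) : R) - 1) * f (m + 1 - 1)
        + β * ∑ i ∈ range (m + 1), f i * f (m + 1 - 1 - i) := by
    rw [coeff_mk, coeff_succ_riccatiRHS, Nat.add_sub_cancel, Nat.cast_succ]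
  constructor
  · rintro h (_ | m) hn
    · omega
    · exact (succ_iff m).1 (congrArg (coeff (m + 1)) h)
  · intro h
    ext (_ | m)
    · simp [riccatiRHS, hf0, coeff_zero_eq_constantCoeff]
    · exact (succ_iff m).2 (h (m + 1) m.succ_pos)

theorem mk_mul_one_sub_C_mul_X_mul_mk_eq_one (c : R) {a b : ℕ → R} (ha0 : a 0 = 1)
    (hab : ∀ n : ℕ, 1 ≤ n → a n = c * ∑ i ∈ range n, b i * a (n - 1 - i)) :
    mk a * (1 - C c * X * mk b) = 1 := by
  have h : mk a = 1 + C c * (X * (mk b * mk a)) := by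
    ext (_ | m)
    · simp [ha0, coeff_zero_eq_constantCoeff]
    · simpa only [coeff_mk, map_add, coeff_one, coeff_C_mul, coeff_succ_X_mul,
        coeff_mk_mul_mk, Nat.succ_ne_zero, if_false, zero_add, Nat.add_sub_cancel]
        using hab (m + 1) m.succ_pos
  linear_combination h

theorem C_mul_X_mul_sub_riccatiRHS_eq_zero {α : R} {A B : R⟦X⟧} (hA : A = riccatiRHS α A)
    (hAB : A * (1 - C (α + 1) * X * B) = 1) :
    C (α + 1) * X * (B - riccatiRHS (α + 1) B) = 0 := by
  set c := C (α + 1)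
  set D := 1 - c * X * B
  have hc : c = C α + 1 := by simp [c]
  have hdc : d⁄dX R c = 0 := derivative_C
  have hD : d⁄dX R D = -c * (B + X * d⁄dX R B) := by
    simp only [D, map_sub, Derivation.map_one_eq_zero, Derivation.leibniz, hdc, derivative_X,
      smul_eq_mul]
    ring
  have hdA : d⁄dX R A * D = -(A * d⁄dX R D) := by
    have h := congrArg (d⁄dX R) hAB
    rw [Derivation.leibniz, Derivation.map_one_eq_zero, smul_eq_mul, smul_eq_mul] at h
    linear_combination h
  -- the Riccati equation for `A = D⁻¹`, multiplied by `D²`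
  have hDA : D = D * D + X * D - 2 * X ^ 2 * d⁄dX R D + C α * X := by
    unfold riccatiRHS at hA
    linear_combination D * D * hA
      + (X * D - D - 2 * X ^ 2 * d⁄dX R D + C α * X * (A * D + 1)) * hAB + 2 * X ^ 2 * D * hdA
  unfold riccatiRHS
  linear_combination hDA - 2 * X ^ 2 * hD - X * hc

theorem eq_riccatiRHS_of_mul_one_sub_eq_one [IsDomain R] {α : R} (hα : α + 1 ≠ 0)
    {A B : R⟦X⟧} (hA : A = riccatiRHS α A) (hAB : A * (1 - C (α + 1) * X * B) = 1) :
    B = riccatiRHS (α + 1) B := by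
  have hcX : C (α + 1) * X ≠ (0 : R⟦X⟧) :=
    mul_ne_zero ((map_ne_zero_iff C C_injective).2 hα) X_ne_zero
  have h := C_mul_X_mul_sub_riccatiRHS_eq_zero hA hAB
  exact sub_eq_zero.1 ((mul_eq_zero.1 h).resolve_left hcX)

end PowerSeries

open PowerSeries

theorem b_satisfies_analogous_recurrence (α : ℝ) (hα : 0 ≤ α) (a b : ℕ → ℝ)
    (ha0 : a 0 = 1)
    (ha : ∀ n : ℕ, 1 ≤ n →
      a n = (2 * (n : ℝ) - 1) * a (n - 1) + α * ∑ i ∈ Finset.range n, a i * a (n - 1 - i))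
    (hb0 : b 0 = 1)
    (hab : ∀ n : ℕ, 1 ≤ n →
      a n = (α + 1) * ∑ i ∈ Finset.range n, b i * a (n - 1 - i)) :
    b 0 = 1 ∧ ∀ n : ℕ, 1 ≤ n →
      b n = (2 * (n : ℝ) - 1) * b (n - 1)
        + (α + 1) * ∑ i ∈ Finset.range n, b i * b (n - 1 - i) := by
  have hA := (mk_eq_riccatiRHS_iff α ha0).2 ha
  have hAB := mk_mul_one_sub_C_mul_X_mul_mk_eq_one (α + 1) ha0 hab
  have hB := eq_riccatiRHS_of_mul_one_sub_eq_one (by positivity) hA hAB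
  exact ⟨hb0, (mk_eq_riccatiRHS_iff (α + 1) hb0).1 hB⟩
end

section
/- Let α ∈ ℝ with α ≠ −1, and let f, g ∈ ℝ[[X]] be formal power series with constant coefficient of f equal to 1, such that f − 1 = 2 X² f' + X f + α X f² and (α + 1) X f g = f − 1 in ℝ[[X]]. Then g has constant coefficient 1 and satisfies g − 1 = 2 X² g' + X g + (α + 1) X g² in ℝ[[X]]. -/
/-!
Cancelling `X` between the two relations gives `(a + 1) f g = 2 X f' + f + a f²`, whose constant
term forces `g(0) = 1`. Differentiating `f - 1 = (a + 1) X f g` expresses `f'` through `g'`; after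
multiplying the equation for `g` by the non-zero series `(a + 1) X f²`, it becomes a linear
combination of the equation for `f`, the relation `f - 1 = (a + 1) X f g` and its derivative.
-/

open PowerSeries

namespace PowerSeries

variable {R : Type*} [CommRing R]

def IsRiccatiSolution (a : R) (f : R⟦X⟧) : Prop :=
  f - 1 = 2 * X ^ 2 * d⁄dX R f + X * f + C a * X * f ^ 2

variable {a c : R} {f g : R⟦X⟧}

theorem derivative_eq_of_C_mul_X_mul_mul_eq_sub_one (hfg : C c * X * f * g = f - 1) :
    d⁄dX R f = C c * (f * g + X * d⁄dX R f * g + X * f * d⁄dX R g) := by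
  have h := congrArg (d⁄dX R) hfg
  simp only [Derivation.leibniz, derivative_C, derivative_X, map_sub, derivative_one,
    smul_eq_mul] at h
  linear_combination -h

theorem IsRiccatiSolution.C_add_one_mul_mul_eq (hf : IsRiccatiSolution a f)
    (hfg : C (a + 1) * X * f * g = f - 1) :
    C (a + 1) * f * g = 2 * X * d⁄dX R f + f + C a * f ^ 2 :=
  X_mul_cancel (by rw [IsRiccatiSolution] at hf; linear_combination hfg + hf)

variable [IsDomain R]

theorem IsRiccatiSolution.constantCoeff_eq_one (ha : a + 1 ≠ 0) (hf : IsRiccatiSolution a f)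
    (hf0 : constantCoeff f = 1) (hfg : C (a + 1) * X * f * g = f - 1) :
    constantCoeff g = 1 := by
  have h := congrArg constantCoeff (hf.C_add_one_mul_mul_eq hfg)
  simp only [map_add, map_mul, map_pow, constantCoeff_C, constantCoeff_X, hf0] at h
  exact mul_left_cancel₀ ha (by linear_combination h)

theorem IsRiccatiSolution.of_C_add_one_mul_X_mul_mul_eq_sub_one (ha : a + 1 ≠ 0)
    (hf : IsRiccatiSolution a f) (hf0 : f ≠ 0) (hfg : C (a + 1) * X * f * g = f - 1) :
    IsRiccatiSolution (a + 1) g := by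
  have hdf := derivative_eq_of_C_mul_X_mul_mul_eq_sub_one hfg
  have hfactor : C (a + 1) * X * f ^ 2 ≠ 0 :=
    mul_ne_zero (mul_ne_zero (C_injective.ne_iff' (map_zero C) |>.2 ha) X_ne_zero)
      (pow_ne_zero 2 hf0)
  rw [IsRiccatiSolution] at hf ⊢
  refine mul_left_cancel₀ hfactor ?_
  rw [map_add, map_one] at hfg hdf ⊢
  linear_combination hf + (X * f + 1 + 2 * X ^ 2 * d⁄dX R f - (C a + 1) * X * f * g) * hfg
    + 2 * X ^ 2 * f * hdf

end PowerSeries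

theorem quotient_series_satisfies_shifted_ode (α : ℝ) (hα : α ≠ -1) (f g : PowerSeries ℝ)
    (hf0 : PowerSeries.constantCoeff f = 1)
    (hf : f - 1 = 2 * PowerSeries.X ^ 2 * derivativeFun f + PowerSeries.X * f
      + PowerSeries.C α * PowerSeries.X * f ^ 2)
    (hfg : PowerSeries.C (α + 1) * PowerSeries.X * f * g = f - 1) :
    PowerSeries.constantCoeff g = 1 ∧
      g - 1 = 2 * PowerSeries.X ^ 2 * derivativeFun g + PowerSeries.X * g
        + PowerSeries.C (α + 1) * PowerSeries.X * g ^ 2 := by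
  have hα1 : α + 1 ≠ 0 := fun h => hα (eq_neg_of_add_eq_zero_left h)
  have hf_ne : f ≠ 0 := fun h => by simp [h] at hf0
  have hriccati : IsRiccatiSolution α f := hf
  exact ⟨hriccati.constantCoeff_eq_one hα1 hf0 hfg,
    hriccati.of_C_add_one_mul_X_mul_mul_eq_sub_one hα1 hf_ne hfg⟩
end

section
/- For every n ∈ ℕ, the sum over all Dyck paths of length 2n of the product, over the rise steps from level k, of (k + 1), equals the double factorial (2n − 1)!! = 1·3·5···(2n−1). (Equivalently, for the semi-infinite Jacobi matrix A_0 with zero diagonal and off-diagonal entries √1, √2, √3, …, one has A_0^{2n}(1,1) = (2n−1)!!, the 2n-th moment of the standard Gaussian distribution.) -/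
/-- Dyck paths of length `2n`: sequences `(i_0, …, i_{2n})` of nonnegative integers with
`i_0 = i_{2n} = 0` and `|i_{j+1} - i_j| = 1`.  Since the levels of such a path never exceed
`n ≤ 2n`, paths are losslessly encoded as functions `Fin (2n+1) → Fin (2n+1)`. -/
def dyckPaths (n : ℕ) : Finset (Fin (2 * n + 1) → Fin (2 * n + 1)) :=
  Finset.univ.filter fun p =>
    (p 0 : ℕ) = 0 ∧ (p (Fin.last (2 * n)) : ℕ) = 0 ∧
      ∀ j : Fin (2 * n),
        (p j.succ : ℕ) = (p j.castSucc : ℕ) + 1 ∨ (p j.castSucc : ℕ) = (p j.succ : ℕ) + 1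

/-- The `α`-weight of a Dyck path: the product, over the rise steps from level `k`,
of `(α + k + 1)`. -/
noncomputable def dyckWeight (α : ℝ) (n : ℕ) (p : Fin (2 * n + 1) → Fin (2 * n + 1)) : ℝ :=
  ∏ j : Fin (2 * n),
    if (p j.succ : ℕ) = (p j.castSucc : ℕ) + 1 then α + (p j.castSucc : ℕ) + 1 else 1

/-- Dyck paths of length `2n` that stay strictly positive except at the endpoints. -/
def strictDyckPaths (n : ℕ) : Finset (Fin (2 * n + 1) → Fin (2 * n + 1)) :=
  (dyckPaths n).filter fun p =>
    ∀ j : Fin (2 * n + 1), 0 < (j : ℕ) → (j : ℕ) < 2 * n → 0 < (p j : ℕ)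



def fAux : ℕ → ℕ → ℕ
  | 0, k => if k = 0 then 1 else 0
  | m+1, 0 => fAux m 1
  | m+1, k+1 => fAux m k + (k+2) * fAux m (k+2)

lemma fAux_zero_of_lt : ∀ m k, m < k → fAux m k = 0 := by
  intro m
  induction m with
  | zero => intro k h; simp [fAux]; omega
  | succ m ih =>
    intro k h
    match k, h with
    | k+1, h =>
      simp [fAux, ih k (by omega), ih (k+2) (by omega)]

lemma fAux_fact : ∀ m k j, m = k + 2*j →
    fAux m k * (k.factorial * (2^j * j.factorial)) = m.factorial := by
  intro m
  induction m with
  | zero =>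
    intro k j h
    have hk : k = 0 := by omega
    have hj : j = 0 := by omega
    subst hk; subst hj; simp [fAux]
  | succ m ih =>
    intro k j h
    match k with
    | 0 =>
      obtain ⟨j', rfl⟩ : ∃ j', j = j' + 1 := ⟨j-1, by omega⟩
      have h1 := ih 1 j' (by omega)
      have hstep : fAux (m+1) 0 = fAux m 1 := rfl
      rw [hstep]
      have e : Nat.factorial 0 * (2^(j'+1) * (j'+1).factorial)
          = (Nat.factorial 1 * (2^j' * j'.factorial)) * (2*(j'+1)) := by
        rw [Nat.factorial_zero, Nat.factorial_one, Nat.factorial_succ, pow_succ]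
        ring
      rw [e, ← Nat.mul_assoc, h1, Nat.factorial_succ]
      have hm : m + 1 = 2 * (j' + 1) := by omega
      rw [hm]; ring
    | k'+1 =>
      have hstep : fAux (m+1) (k'+1) = fAux m k' + (k'+2) * fAux m (k'+2) := rfl
      match j with
      | 0 =>
        have hk : m = k' := by omega
        have hz : fAux m (k'+2) = 0 := fAux_zero_of_lt m (k'+2) (by omega)
        have h1 := ih k' 0 (by omega)
        rw [hstep, hz]
        have e : (fAux m k' + (k'+2) * 0) * ((k'+1).factorial * (2^0 * Nat.factorial 0))
            = (fAux m k' * (k'.factorial * (2^0 * Nat.factorial 0))) * (k'+1) := by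
          rw [Nat.factorial_succ]; ring
        rw [e, h1, Nat.factorial_succ, hk]; ring
      | j''+1 =>
        have h1 := ih k' (j''+1) (by omega)
        have h2 := ih (k'+2) j'' (by omega)
        rw [hstep]
        have e1 : (fAux m k' + (k'+2) * fAux m (k'+2)) * ((k'+1).factorial * (2^(j''+1) * (j''+1).factorial))
            = (fAux m k' * (k'.factorial * (2^(j''+1) * (j''+1).factorial))) * (k'+1)
              + (fAux m (k'+2) * ((k'+2).factorial * (2^j'' * j''.factorial))) * (2*(j''+1)) := by
          rw [show ((k'+2).factorial) = (k'+2)*(k'+1).factorial from rfl,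
            Nat.factorial_succ k', Nat.factorial_succ j'', pow_succ]
          ring
        rw [e1, h1, h2, Nat.factorial_succ]
        have hm : m + 1 = (k'+1) + 2*(j''+1) := h
        rw [hm]; ring

lemma fAux_doubleFactorial (n : ℕ) : fAux (2*n) 0 = Nat.doubleFactorial (2*n - 1) := by
  have h := fAux_fact (2*n) 0 n (by omega)
  rw [Nat.factorial_zero, Nat.one_mul] at h
  rcases n with _ | n'
  · simp at h ⊢; simpa using h
  · have hfac : (2*(n'+1)).factorial = (2*(n'+1)).doubleFactorial * (2*(n'+1) - 1).doubleFactorial := by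
      have := Nat.factorial_eq_mul_doubleFactorial (2*(n'+1) - 1)
      have he : 2*(n'+1) - 1 + 1 = 2*(n'+1) := by omega
      rw [he] at this
      exact this
    rw [hfac, Nat.doubleFactorial_two_mul] at h
    have hpos : 0 < 2^(n'+1) * (n'+1).factorial := by positivity
    have hkey : 2^(n'+1)*(n'+1).factorial * fAux (2*(n'+1)) 0
        = 2^(n'+1)*(n'+1).factorial * (2*(n'+1)-1).doubleFactorial := by
      rw [← h]; ring
    exact Nat.eq_of_mul_eq_mul_left hpos hkey

lemma sum_tridiag {N : ℕ} (g : Fin N → ℝ) (A : Matrix (Fin N) (Fin N) ℝ) (a b : ℕ → ℝ)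
    (hA : ∀ i j : Fin N, A i j =
      if (i:ℕ)+1 = (j:ℕ) then a (i:ℕ) else if (j:ℕ)+1 = (i:ℕ) then b (j:ℕ) else 0)
    (k : Fin N) :
    ∑ j : Fin N, g j * A j k =
      (if h : 0 < (k:ℕ) then g ⟨(k:ℕ)-1, by omega⟩ * a ((k:ℕ)-1) else 0)
      + (if h : (k:ℕ)+1 < N then g ⟨(k:ℕ)+1, h⟩ * b (k:ℕ) else 0) := by
  have hterm : ∀ j : Fin N, g j * A j k =
      (if (j:ℕ)+1 = (k:ℕ) then g j * a (j:ℕ) else 0)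
      + (if (k:ℕ)+1 = (j:ℕ) then g j * b (k:ℕ) else 0) := by
    intro j
    rw [hA]
    rcases eq_or_ne ((j:ℕ)+1) ((k:ℕ)) with h1 | h1
    · rw [if_pos h1, if_pos h1, if_neg (show ¬((k:ℕ)+1 = (j:ℕ)) by omega), add_zero]
    · rw [if_neg h1, if_neg h1, zero_add]
      rcases eq_or_ne ((k:ℕ)+1) ((j:ℕ)) with h2 | h2
      · rw [if_pos h2, if_pos h2]
      · rw [if_neg h2, if_neg h2, mul_zero]
  rw [Finset.sum_congr rfl (fun j _ => hterm j), Finset.sum_add_distrib]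
  congr 1
  · by_cases hk : 0 < (k:ℕ)
    · rw [dif_pos hk]
      refine (Finset.sum_eq_single (⟨(k:ℕ)-1, by omega⟩ : Fin N) ?_ ?_).trans ?_
      · intro j _ hj
        apply if_neg
        intro hc
        apply hj
        apply Fin.ext
        simp only [Fin.val_mk]
        omega
      · intro h; exact absurd (Finset.mem_univ _) h
      · rw [if_pos (by simp only [Fin.val_mk]; omega)]
    · rw [dif_neg hk]
      apply Finset.sum_eq_zero
      intro j _
      apply if_neg
      omega
  · by_cases hk : (k:ℕ)+1 < N
    · rw [dif_pos hk]
      refine (Finset.sum_eq_single (⟨(k:ℕ)+1, hk⟩ : Fin N) ?_ ?_).trans ?_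
      · intro j _ hj
        apply if_neg
        intro hc
        apply hj
        apply Fin.ext
        simp only [Fin.val_mk]
        omega
      · intro h; exact absurd (Finset.mem_univ _) h
      · rw [if_pos (by simp only [Fin.val_mk])]
    · rw [dif_neg hk]
      apply Finset.sum_eq_zero
      intro j _
      apply if_neg
      have := j.isLt
      omega

lemma pow_row_succ {N : ℕ} (A : Matrix (Fin N) (Fin N) ℝ) (m : ℕ) (i k : Fin N) :
    (A ^ (m+1)) i k = ∑ j, (A^m) i j * A j k := by
  rw [pow_succ, Matrix.mul_apply]

lemma sqrt_fact_mul (k : ℕ) :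
    Real.sqrt (Nat.factorial k) * Real.sqrt ((k:ℝ)+1) = Real.sqrt (Nat.factorial (k+1)) := by
  rw [← Real.sqrt_mul (by positivity)]
  congr 1
  rw [Nat.factorial_succ]
  push_cast
  ring

lemma sqrt_fact_succ_mul (k : ℕ) :
    Real.sqrt (Nat.factorial (k+1)) * Real.sqrt ((k:ℝ)+1) = Real.sqrt (Nat.factorial k) * ((k:ℝ)+1) := by
  rw [← sqrt_fact_mul k, mul_assoc, Real.mul_self_sqrt (by positivity)]

lemma jacobi_row (n : ℕ) : ∀ m, ∀ k : Fin (n+1), m + (k:ℕ) ≤ 2*n →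
    ((jacobiM 0 (n+1)) ^ m) 0 k = Real.sqrt (Nat.factorial (k:ℕ)) * (fAux m (k:ℕ) : ℝ) := by
  intro m
  induction m with
  | zero =>
    intro k _
    rw [pow_zero, Matrix.one_apply]
    by_cases hk0 : (k:ℕ) = 0
    · have hk : (0 : Fin (n+1)) = k := Fin.ext (by simp [hk0])
      rw [if_pos hk, hk0]
      simp [fAux]
    · rw [if_neg (fun hc => hk0 (by rw [← hc]; rfl))]
      have : fAux 0 (k:ℕ) = 0 := by simp [fAux, hk0]
      rw [this]
      simp
  | succ m ih =>
    intro k hk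
    rw [pow_row_succ, sum_tridiag _ _ (fun i => Real.sqrt ((i:ℝ)+1)) (fun j => Real.sqrt ((j:ℝ)+1))
      (by intro i j; simp only [jacobiM, zero_add])]
    by_cases hk0 : (k:ℕ) = 0
    · rw [dif_neg (by omega), zero_add, dif_pos (show (k:ℕ)+1 < n+1 by omega)]
      have h1 := ih ⟨(k:ℕ)+1, by omega⟩ (by simp only [Fin.val_mk]; omega)
      rw [h1]
      simp only [Fin.val_mk, hk0]
      rw [show fAux (m+1) 0 = fAux m 1 from rfl]
      norm_num
    · obtain ⟨k', hk'⟩ : ∃ k', (k:ℕ) = k' + 1 := ⟨(k:ℕ)-1, by omega⟩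
      rw [dif_pos (show 0 < (k:ℕ) by omega)]
      have h1 := ih ⟨(k:ℕ)-1, by omega⟩ (by simp only [Fin.val_mk]; omega)
      rw [h1]
      simp only [Fin.val_mk, hk']
      rw [show k' + 1 - 1 = k' from rfl]
      rw [show fAux (m+1) (k'+1) = fAux m k' + (k'+2) * fAux m (k'+2) from rfl]
      by_cases hk1 : (k:ℕ)+1 < n+1
      · rw [dif_pos (show k'+1+1 < n+1 by omega)]
        have h2 := ih ⟨k'+1+1, by omega⟩ (by simp only [Fin.val_mk]; omega)
        rw [h2]
        simp only [Fin.val_mk, hk']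
        rw [mul_assoc, mul_comm ((fAux m k' : ℝ)) _, ← mul_assoc, sqrt_fact_mul,
          mul_assoc, mul_comm ((fAux m (k'+1+1) : ℝ)) _, ← mul_assoc]
        rw [sqrt_fact_succ_mul (k'+1)]
        push_cast
        ring
      · rw [dif_neg (show ¬(k'+1+1 < n+1) by omega), add_zero]
        have hz : fAux m (k'+2) = 0 := by
          apply fAux_zero_of_lt
          have := k.isLt
          omega
        rw [hz]
        rw [mul_assoc, mul_comm ((fAux m k' : ℝ)) _, ← mul_assoc, sqrt_fact_mul]
        push_cast
        ring

noncomputable def TM (n : ℕ) : Matrix (Fin (2*n+1)) (Fin (2*n+1)) ℝ := fun i j =>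
  if (i:ℕ)+1 = (j:ℕ) then ((i:ℕ)+1 : ℝ) else if (j:ℕ)+1 = (i:ℕ) then 1 else 0

lemma TM_row (n : ℕ) : ∀ m, ∀ k : Fin (2*n+1), m + (k:ℕ) ≤ 2*n+1 →
    ((TM n) ^ m) 0 k = ((fAux m (k:ℕ) * Nat.factorial (k:ℕ) : ℕ) : ℝ) := by
  intro m
  induction m with
  | zero =>
    intro k _
    rw [pow_zero, Matrix.one_apply]
    by_cases hk0 : (k:ℕ) = 0
    · have hk : (0 : Fin (2*n+1)) = k := Fin.ext (by simp [hk0])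
      rw [if_pos hk, hk0]
      simp [fAux]
    · rw [if_neg (fun hc => hk0 (by rw [← hc]; rfl))]
      have : fAux 0 (k:ℕ) = 0 := by simp [fAux, hk0]
      rw [this]
      simp
  | succ m ih =>
    intro k hk
    rw [pow_row_succ, sum_tridiag _ _ (fun i => ((i:ℝ)+1)) (fun _ => 1)
      (by intro i j; simp only [TM])]
    by_cases hk0 : (k:ℕ) = 0
    · rw [dif_neg (by omega), zero_add]
      by_cases h1 : (k:ℕ)+1 < 2*n+1
      · rw [dif_pos h1]
        have h2 := ih ⟨(k:ℕ)+1, h1⟩ (by simp only [Fin.val_mk]; omega)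
        rw [h2]
        simp only [Fin.val_mk, hk0]
        rw [show fAux (m+1) 0 = fAux m 1 from rfl]
        push_cast [Nat.factorial]
        ring
      · rw [dif_neg h1]
        have hn : n = 0 := by omega
        have hm : m = 0 := by omega
        subst hn; subst hm
        simp only [hk0]
        rw [show fAux (0+1) 0 = fAux 0 1 from rfl]
        simp [fAux]
    · obtain ⟨k', hk'⟩ : ∃ k', (k:ℕ) = k' + 1 := ⟨(k:ℕ)-1, by omega⟩
      rw [dif_pos (show 0 < (k:ℕ) by omega)]
      have h1 := ih ⟨(k:ℕ)-1, by omega⟩ (by simp only [Fin.val_mk]; omega)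
      rw [h1]
      simp only [Fin.val_mk, hk']
      rw [show k' + 1 - 1 = k' from rfl]
      rw [show fAux (m+1) (k'+1) = fAux m k' + (k'+2) * fAux m (k'+2) from rfl]
      by_cases hk1 : k'+1+1 < 2*n+1
      · rw [dif_pos hk1]
        have h2 := ih ⟨k'+1+1, hk1⟩ (by simp only [Fin.val_mk]; omega)
        rw [h2]
        simp only [Fin.val_mk]
        rw [show (k'+1+1).factorial = (k'+2) * (k'+1).factorial from rfl,
          show (k'+1).factorial = (k'+1) * k'.factorial from rfl]
        push_cast
        ring
      · rw [dif_neg hk1, add_zero]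
        have hz : fAux m (k'+2) = 0 := by
          apply fAux_zero_of_lt
          omega
        rw [hz]
        rw [show (k'+1).factorial = (k'+1) * k'.factorial from rfl]
        push_cast
        ring

lemma pow_entry {K : ℕ} (A : Matrix (Fin K) (Fin K) ℝ) : ∀ (m : ℕ) (i j : Fin K),
    (A ^ m) i j = ∑ p ∈ Finset.univ.filter
        (fun p : Fin (m+1) → Fin K => p 0 = i ∧ p (Fin.last m) = j),
      ∏ t : Fin m, A (p t.castSucc) (p t.succ) := by
  intro m
  induction m with
  | zero =>
    intro i j
    rw [pow_zero, Matrix.one_apply, Finset.sum_filter]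
    rw [Fintype.sum_equiv (Equiv.funUnique (Fin 1) (Fin K))
      (fun p : Fin 1 → Fin K => if p 0 = i ∧ p (Fin.last 0) = j
        then (∏ t : Fin 0, A (p t.castSucc) (p t.succ)) else 0)
      (fun x : Fin K => if x = i ∧ x = j then 1 else 0)
      (by intro p; simp [Equiv.funUnique])]
    by_cases hij : i = j
    · subst hij
      simp
    · rw [if_neg hij]
      symm
      apply Finset.sum_eq_zero
      intro x _
      apply if_neg
      rintro ⟨rfl, rfl⟩
      exact hij rfl
  | succ m ih =>
    intro i j
    rw [pow_succ, Matrix.mul_apply]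
    have hrw : ∀ kk : Fin K, (A^m) i kk * A kk j =
        ∑ q ∈ Finset.univ.filter
          (fun q : Fin (m+1) → Fin K => q 0 = i ∧ q (Fin.last m) = kk),
        (∏ t : Fin m, A (q t.castSucc) (q t.succ)) * A kk j := by
      intro kk
      rw [ih, Finset.sum_mul]
    rw [Finset.sum_congr rfl (fun kk _ => hrw kk), Finset.sum_sigma']
    refine Finset.sum_nbij' (fun x => Fin.snoc x.2 j)
      (fun p => ⟨p ((Fin.last m).castSucc), Fin.init p⟩) ?_ ?_ ?_ ?_ ?_
    · rintro ⟨kk, q⟩ hx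
      rw [Finset.mem_sigma] at hx
      obtain ⟨hq0, hql⟩ := (Finset.mem_filter.mp hx.2).2
      dsimp only at hq0 hql ⊢
      rw [Finset.mem_filter]
      refine ⟨Finset.mem_univ _, ?_, ?_⟩
      · rw [show (0 : Fin (m+1+1)) = Fin.castSucc 0 from rfl, Fin.snoc_castSucc]
        exact hq0
      · rw [Fin.snoc_last]
    · intro p hp
      obtain ⟨hp0, hpl⟩ := (Finset.mem_filter.mp hp).2
      rw [Finset.mem_sigma]
      refine ⟨Finset.mem_univ _, ?_⟩
      rw [Finset.mem_filter]
      exact ⟨Finset.mem_univ _, hp0, rfl⟩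
    · rintro ⟨kk, q⟩ hx
      rw [Finset.mem_sigma] at hx
      obtain ⟨hq0, hql⟩ := (Finset.mem_filter.mp hx.2).2
      dsimp only at hq0 hql ⊢
      rw [Fin.snoc_castSucc, Fin.init_snoc, hql]
    · intro p hp
      obtain ⟨hp0, hpl⟩ := (Finset.mem_filter.mp hp).2
      dsimp only
      rw [← hpl]
      exact Fin.snoc_init_self p
    · rintro ⟨kk, q⟩ hx
      rw [Finset.mem_sigma] at hx
      obtain ⟨hq0, hql⟩ := (Finset.mem_filter.mp hx.2).2
      dsimp only at hq0 hql ⊢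
      rw [Fin.prod_univ_castSucc]
      congr 1
      · apply Finset.prod_congr rfl
        intro t _
        rw [Fin.succ_castSucc, Fin.snoc_castSucc, Fin.snoc_castSucc]
      · rw [Fin.succ_last, Fin.snoc_castSucc, Fin.snoc_last, hql]


theorem dyck_sum_alpha_zero_eq_doubleFactorial (n : ℕ) :
    (∑ p ∈ dyckPaths n,
        ∏ j : Fin (2 * n),
          if (p j.succ : ℕ) = (p j.castSucc : ℕ) + 1
          then ((p j.castSucc : ℕ) + 1 : ℝ) else 1)
      = Nat.doubleFactorial (2 * n - 1) ∧
    u 0 n = Nat.doubleFactorial (2 * n - 1) := by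
  have hT : ((TM n) ^ (2*n)) 0 0 = ((Nat.doubleFactorial (2*n-1) : ℕ) : ℝ) := by
    rw [TM_row n (2*n) 0 (by simp),
      show ((0 : Fin (2*n+1)) : ℕ) = 0 from rfl, Nat.factorial_zero, Nat.mul_one,
      fAux_doubleFactorial]
  constructor
  · have hexp := pow_entry (TM n) (2*n) 0 0
    have hsub : dyckPaths n ⊆ Finset.univ.filter
        (fun p : Fin (2*n+1) → Fin (2*n+1) => p 0 = 0 ∧ p (Fin.last (2*n)) = 0) := by
      intro p hp
      obtain ⟨h0, hl, _⟩ := (Finset.mem_filter.mp hp).2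
      exact Finset.mem_filter.mpr ⟨Finset.mem_univ _, Fin.ext h0, Fin.ext hl⟩
    calc ∑ p ∈ dyckPaths n,
          ∏ j : Fin (2 * n),
            (if (p j.succ : ℕ) = (p j.castSucc : ℕ) + 1
            then ((p j.castSucc : ℕ) + 1 : ℝ) else 1)
        = ∑ p ∈ dyckPaths n, ∏ t : Fin (2*n), TM n (p t.castSucc) (p t.succ) := by
          apply Finset.sum_congr rfl
          intro p hp
          obtain ⟨_, _, hstep⟩ := (Finset.mem_filter.mp hp).2
          apply Finset.prod_congr rfl
          intro t _
          rcases hstep t with h | h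
          · rw [if_pos h, TM, if_pos h.symm]
          · rw [if_neg (by omega), TM, if_neg (by omega), if_pos h.symm]
      _ = ∑ p ∈ Finset.univ.filter
            (fun p : Fin (2*n+1) → Fin (2*n+1) => p 0 = 0 ∧ p (Fin.last (2*n)) = 0),
          ∏ t : Fin (2*n), TM n (p t.castSucc) (p t.succ) := by
          apply Finset.sum_subset hsub
          intro p hpE hpd
          obtain ⟨hp0, hpl⟩ := (Finset.mem_filter.mp hpE).2
          have : ¬ ∀ j : Fin (2 * n),
              (p j.succ : ℕ) = (p j.castSucc : ℕ) + 1 ∨ (p j.castSucc : ℕ) = (p j.succ : ℕ) + 1 := by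
            intro hall
            exact hpd (Finset.mem_filter.mpr ⟨Finset.mem_univ _,
              by rw [hp0]; rfl, by rw [hpl]; rfl, hall⟩)
          push_neg at this
          obtain ⟨t, ht1, ht2⟩ := this
          apply Finset.prod_eq_zero (Finset.mem_univ t)
          rw [TM, if_neg (by omega), if_neg (by omega)]
      _ = ((TM n) ^ (2*n)) 0 0 := hexp.symm
      _ = _ := hT
  · rw [show u 0 n = ((jacobiM 0 (n+1)) ^ (2*n)) 0 0 from rfl,
      jacobi_row n (2*n) 0 (by simp),
      show ((0 : Fin (n+1)) : ℕ) = 0 from rfl, Nat.factorial_zero, Nat.cast_one,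
      Real.sqrt_one, one_mul, fAux_doubleFactorial]
end

section
/- For every m ∈ ℕ and every y ∈ ℝ, ∫_ℝ t^m e^{−t²/2} e^{i y t} dt = √(2π) · i^m · He_m(y) · e^{−y²/2}, where He_m is the m-th probabilists' Hermite polynomial. -/
/-!
Write `F_m(y)` for the left-hand side. For `m = 0` it is the Fourier transform of the Gaussian,
`√(2π) e^{-y²/2}`. Differentiating under the integral sign gives `F_m' = i F_{m+1}`, while the
recursion `He_{m+1} = X He_m - He_m'` says precisely that
`(He_m e^{-y²/2})' = -He_{m+1} e^{-y²/2}`; so induction on `m` propagates the formula.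
-/

open MeasureTheory Complex Polynomial

theorem integrable_pow_mul_cexp_neg_mul_sq {b : ℂ} (hb : 0 < b.re) (m : ℕ) :
    Integrable fun t : ℝ => (t : ℂ) ^ m * cexp (-b * (t : ℂ) ^ 2) := by
  refine (integrable_rpow_mul_exp_neg_mul_sq hb (s := m)
    (neg_one_lt_zero.trans_le m.cast_nonneg)).norm.mono' (by fun_prop) (ae_of_all _ fun t => ?_)
  rw [norm_mul, norm_pow, norm_real, norm_cexp_neg_mul_sq, norm_mul, Real.rpow_natCast, norm_pow,
    Real.norm_of_nonneg (Real.exp_pos _).le]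

theorem norm_cexp_I_mul_ofReal_mul_ofReal (y t : ℝ) : ‖cexp (I * y * t)‖ = 1 := by
  rw [show I * y * t = ((y * t : ℝ) : ℂ) * I by push_cast; ring, norm_exp_ofReal_mul_I]

theorem hasDerivAt_integral_mul_cexp_I_mul {f : ℝ → ℂ} (hf : Integrable f)
    (hf' : Integrable fun t : ℝ => (t : ℂ) * f t) (y : ℝ) :
    HasDerivAt (fun y : ℝ => ∫ t : ℝ, f t * cexp (I * y * t))
      (I * ∫ t : ℝ, (t : ℂ) * f t * cexp (I * y * t)) y := by
  have hmeas {g : ℝ → ℂ} (hg : Integrable g) (x : ℝ) :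
      AEStronglyMeasurable fun t : ℝ => g t * cexp (I * x * t) :=
    hg.aestronglyMeasurable.mul
      (by fun_prop : Continuous fun t : ℝ => cexp (I * x * t)).aestronglyMeasurable
  have hderiv (t x : ℝ) : HasDerivAt (fun x : ℝ => f t * cexp (I * x * t))
      (I * ((t : ℂ) * f t * cexp (I * x * t))) x :=
    ((((hasDerivAt_id (x : ℂ)).const_mul I).mul_const (t : ℂ)).cexp.comp_ofReal.const_mul
      (f t)).congr_deriv (by simp only [id]; ring)
  rw [← integral_const_mul]
  refine (hasDerivAt_integral_of_dominated_loc_of_deriv_le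
    (F' := fun x t => I * ((t : ℂ) * f t * cexp (I * x * t)))
    (bound := fun t : ℝ => ‖(t : ℂ) * f t‖) Filter.univ_mem (.of_forall (hmeas hf)) ?_
    ((hmeas hf' y).const_mul I) ?_ hf'.norm (ae_of_all _ fun t x _ => hderiv t x)).2
  · exact hf.norm.mono' (hmeas hf y) (ae_of_all _ fun t => by
      rw [norm_mul, norm_cexp_I_mul_ofReal_mul_ofReal, mul_one])
  · exact ae_of_all _ fun t x _ => by
      rw [norm_mul, norm_I, one_mul, norm_mul, norm_cexp_I_mul_ofReal_mul_ofReal, mul_one]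

theorem hasDerivAt_aeval_hermite_mul_exp_neg_sq_div_two (m : ℕ) (y : ℝ) :
    HasDerivAt (fun y : ℝ => aeval y (hermite m) * Real.exp (-y ^ 2 / 2))
      (-(aeval y (hermite (m + 1)) * Real.exp (-y ^ 2 / 2))) y := by
  have hexp : HasDerivAt (fun y : ℝ => Real.exp (-y ^ 2 / 2)) (-y * Real.exp (-y ^ 2 / 2)) y := by
    have hquad : HasDerivAt (fun y : ℝ => -y ^ 2 / 2) (-y) y := by
      refine (((hasDerivAt_pow 2 y).neg).div_const 2).congr_deriv ?_
      ring
    exact hquad.exp.congr_deriv (mul_comm _ _)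
  refine ((Polynomial.hasDerivAt_aeval (q := hermite m) y).mul hexp).congr_deriv ?_
  rw [hermite_succ, map_sub, map_mul, aeval_X]
  ring

theorem integral_cexp_neg_sq_div_two_mul_cexp_I_mul (y : ℝ) :
    ∫ t : ℝ, cexp (-(t : ℂ) ^ 2 / 2) * cexp (I * y * t)
      = (Real.sqrt (2 * Real.pi) : ℂ) * cexp (-(y : ℂ) ^ 2 / 2) := by
  have hsqrt : ((Real.pi : ℂ) / (1 / 2)) ^ (1 / 2 : ℂ) = Real.sqrt (2 * Real.pi) := by
    rw [Real.sqrt_eq_rpow, ofReal_cpow (by positivity)]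
    push_cast
    ring_nf
  calc ∫ t : ℝ, cexp (-(t : ℂ) ^ 2 / 2) * cexp (I * y * t)
      = ∫ t : ℝ, cexp (I * y * t) * cexp (-(1 / 2) * (t : ℂ) ^ 2) := by
        congr with t
        rw [mul_comm]
        ring_nf
    _ = _ := fourierIntegral_gaussian (by norm_num) y
    _ = _ := by
        rw [hsqrt]
        ring_nf

/-- Fourier-type integral of `t^m e^{-t²/2}`: for every `m ∈ ℕ` and `y ∈ ℝ`,
`∫ t^m e^{-t²/2} e^{iyt} dt = √(2π) iᵐ Heₘ(y) e^{-y²/2}`, where `Heₘ` is the `m`-th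
probabilists' Hermite polynomial (`Polynomial.hermite m`). -/
theorem integral_monomial_gaussian_fourier (m : ℕ) (y : ℝ) :
    ∫ t : ℝ, (t : ℂ) ^ m * Complex.exp (-(t : ℂ) ^ 2 / 2) * Complex.exp (Complex.I * y * t)
      = (Real.sqrt (2 * Real.pi) : ℂ) * Complex.I ^ m
        * ((Polynomial.aeval y (Polynomial.hermite m) : ℝ) : ℂ)
        * Complex.exp (-(y : ℂ) ^ 2 / 2) := by
  induction m generalizing y with
  | zero => simpa using integral_cexp_neg_sq_div_two_mul_cexp_I_mul y
  | succ m ih =>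
    have hint (k : ℕ) : Integrable fun t : ℝ => (t : ℂ) ^ k * cexp (-(t : ℂ) ^ 2 / 2) := by
      simpa [neg_div, div_eq_inv_mul] using
        integrable_pow_mul_cexp_neg_mul_sq (b := 1 / 2) (by norm_num) k
    have hpow : ∀ t : ℝ, (t : ℂ) ^ (m + 1) * cexp (-(t : ℂ) ^ 2 / 2)
        = t * ((t : ℂ) ^ m * cexp (-(t : ℂ) ^ 2 / 2)) := fun t => by ring
    have ih' (y : ℝ) : ∫ t : ℝ, (t : ℂ) ^ m * cexp (-(t : ℂ) ^ 2 / 2) * cexp (I * y * t)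
        = Real.sqrt (2 * Real.pi) * I ^ m
          * ((aeval y (hermite m) * Real.exp (-y ^ 2 / 2) : ℝ) : ℂ) := by
      rw [ih]; push_cast; ring
    have hderiv := (hasDerivAt_integral_mul_cexp_I_mul (hint m)
      (by simpa only [hpow] using hint (m + 1)) y).unique
      (((hasDerivAt_aeval_hermite_mul_exp_neg_sq_div_two m y).ofReal_comp.const_mul
        (Real.sqrt (2 * Real.pi) * I ^ m : ℂ)).congr_of_eventuallyEq (.of_forall ih'))
    simp only [← hpow] at hderiv
    apply mul_left_cancel₀ I_ne_zero
    rw [hderiv]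
    push_cast
    linear_combination -(Real.sqrt (2 * Real.pi) * I ^ m * aeval y (hermite (m + 1))
      * cexp (-(y : ℂ) ^ 2 / 2)) * I_sq
end

section
/- For every fixed n ∈ ℕ, u_n(α)/α^n converges to the n-th Catalan number C_n = (1/(n+1)) · binom(2n, n) as α → ∞. (Equivalently, the moments of the spectral measure of α^{−1/2} A_α converge to the moments of the semicircle law on [−2, 2].) -/
open Filter

/-!
After rescaling by `α^{-1/2}`, the off-diagonal entries `√((α + k + 1) / α)` of the truncated
Jacobi matrix tend to `1`, so `u α n / α ^ n` tends to the `(0,0)` entry of the `2n`-th power of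
the adjacency matrix of a path. That entry counts walks of length `2n` from `0` back to `0` on the
half line (the truncation to `n + 1` vertices is never felt), and the reflection principle
`walks = C(2n, n) - C(2n, n + 1)` identifies their number with the Catalan number.
-/

open Finset SimpleGraph Topology

/-- The number of walks of length `m` with steps `±1` from `0` to `k` that stay in `ℕ`. -/
def halfLineWalks : ℕ → ℕ → ℕ
  | 0, 0 => 1
  | 0, _ + 1 => 0
  | m + 1, 0 => halfLineWalks m 1
  | m + 1, k + 1 => halfLineWalks m k + halfLineWalks m (k + 2)

lemma halfLineWalks_eq_zero_of_lt : ∀ {m k : ℕ}, m < k → halfLineWalks m k = 0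
  | 0, _ + 1, _ => rfl
  | m + 1, k + 1, h => by
    rw [halfLineWalks, halfLineWalks_eq_zero_of_lt (by omega),
      halfLineWalks_eq_zero_of_lt (by omega)]

lemma halfLineWalks_self : ∀ m : ℕ, halfLineWalks m m = 1
  | 0 => rfl
  | m + 1 => by rw [halfLineWalks, halfLineWalks_self, halfLineWalks_eq_zero_of_lt (by omega)]

-- The ballot formula, in additive form to avoid truncated subtraction.
lemma halfLineWalks_add_choose (b d : ℕ) :
    halfLineWalks (d + 2 * b) d + (d + 2 * b).choose (d + b + 1) = (d + 2 * b).choose b := by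
  induction b generalizing d with
  | zero => simp [halfLineWalks_self]
  | succ c ihc =>
    induction d with
    | zero =>
      have h := ihc 1
      rw [show 1 + 2 * c = 2 * c + 1 by ring, show 1 + c + 1 = c + 1 + 1 by ring] at h
      rw [show 0 + 2 * (c + 1) = 2 * c + 1 + 1 by ring, show 0 + (c + 1) + 1 = c + 1 + 1 by ring,
        halfLineWalks, Nat.choose_succ_succ' (2 * c + 1) (c + 1),
        Nat.choose_succ_succ' (2 * c + 1) c]
      omega
    | succ e ihd =>
      have h := ihc (e + 2)
      rw [show e + 2 + 2 * c = e + 2 * (c + 1) by ring,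
        show e + 2 + c + 1 = e + (c + 1) + 1 + 1 by ring] at h
      rw [show e + 1 + 2 * (c + 1) = e + 2 * (c + 1) + 1 by ring,
        show e + 1 + (c + 1) + 1 = e + (c + 1) + 1 + 1 by ring, halfLineWalks,
        Nat.choose_succ_succ' _ (e + (c + 1) + 1), Nat.choose_succ_succ' _ c]
      omega

lemma catalan_add_choose_succ (n : ℕ) :
    catalan n + (2 * n).choose (n + 1) = (2 * n).choose n := by
  have hcat := succ_mul_catalan_eq_centralBinom n
  have hchoose := Nat.choose_succ_right_eq (2 * n) n
  rw [Nat.centralBinom, show 2 * n - n = n by omega] at *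
  apply Nat.eq_of_mul_eq_mul_left n.succ_pos
  nlinarith

lemma halfLineWalks_two_mul_zero (n : ℕ) : halfLineWalks (2 * n) 0 = catalan n := by
  have h := halfLineWalks_add_choose n 0
  rw [zero_add, zero_add, ← catalan_add_choose_succ] at h
  omega

instance (N : ℕ) : DecidableRel (pathGraph N).Adj := fun _ _ => decidable_of_iff' _ pathGraph_adj

lemma sum_neighborFinset_pathGraph {M : Type*} [AddCommMonoid M] {N : ℕ} (k : Fin N)
    (f : ℕ → M) :
    ∑ j ∈ (pathGraph N).neighborFinset k, f j =
      (if (k : ℕ) + 1 < N then f (k + 1) else 0) + (if 0 < (k : ℕ) then f (k - 1) else 0) := by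
  have hsplit (j : ℕ) : (if (k : ℕ) + 1 = j ∨ j + 1 = k then f j else 0) =
      (if (k : ℕ) + 1 = j then f j else 0) +
        if 0 < (k : ℕ) then (if (k : ℕ) - 1 = j then f j else 0) else 0 := by
    split_ifs <;> first | omega | simp
  rw [neighborFinset_eq_filter, sum_filter]
  simp only [pathGraph_adj]
  rw [Fin.sum_univ_eq_sum_range (fun j => if (k : ℕ) + 1 = j ∨ j + 1 = k then f j else 0)]
  simp only [hsplit, sum_add_distrib, sum_ite_irrel, sum_ite_eq, mem_range, sum_const_zero,
    (by omega : (k : ℕ) - 1 < N), if_true]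

lemma pathGraph_adjMatrix_pow_apply_zero {R : Type*} [Semiring R] {N m : ℕ} (k : Fin (N + 1))
    (hk : m + k ≤ 2 * N) : ((pathGraph (N + 1)).adjMatrix R ^ m) k 0 = halfLineWalks m k := by
  induction m generalizing k with
  | zero =>
    rcases k with ⟨_ | k, hk⟩
    · simp [halfLineWalks]
    · simp [halfLineWalks, Fin.ext_iff]
  | succ m ih =>
    have hnbr : ∀ j ∈ (pathGraph (N + 1)).neighborFinset k, m + j ≤ 2 * N := by
      intro j hj
      rw [mem_neighborFinset, pathGraph_adj] at hj
      omega
    rw [pow_succ', adjMatrix_mul_apply, sum_congr rfl fun j hj => ih j (hnbr j hj),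
      sum_neighborFinset_pathGraph k fun j => (halfLineWalks m j : R)]
    rcases k with ⟨_ | e, he⟩
    · simp [halfLineWalks, (by omega : 1 < N + 1)]
    · simp only at hk ⊢
      by_cases htop : e + 1 + 1 < N + 1
      · simp only [halfLineWalks, if_pos htop, if_pos e.succ_pos, Nat.cast_add]
        exact add_comm _ _
      · simp [halfLineWalks, htop, halfLineWalks_eq_zero_of_lt (by omega : m < e + 2)]

lemma tendsto_inv_sqrt_mul_sqrt_add (c : ℝ) :
    Tendsto (fun x : ℝ => (√x)⁻¹ * √(x + c)) atTop (𝓝 1) := by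
  have hlim : Tendsto (fun x : ℝ => √(1 + c / x)) atTop (𝓝 1) := by
    simpa using ((tendsto_const_nhds.div_atTop tendsto_id).const_add 1).sqrt
  refine hlim.congr' ?_
  filter_upwards [eventually_gt_atTop 0] with x hx
  rw [← Real.sqrt_inv, ← Real.sqrt_mul (inv_nonneg.2 hx.le), inv_mul_eq_div, add_div,
    div_self hx.ne']

lemma tendsto_inv_sqrt_smul_jacobiM (N : ℕ) :
    Tendsto (fun α : ℝ => (√α)⁻¹ • jacobiM α N) atTop (𝓝 ((pathGraph N).adjMatrix ℝ)) := by
  refine tendsto_pi_nhds.2 fun i => tendsto_pi_nhds.2 fun j => ?_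
  simp only [Matrix.smul_apply, smul_eq_mul, jacobiM, adjMatrix_apply, pathGraph_adj, add_assoc]
  split_ifs with h₁ hadj h₂ hadj hadj
  · exact tendsto_inv_sqrt_mul_sqrt_add _
  · exact absurd (Or.inl h₁) hadj
  · exact tendsto_inv_sqrt_mul_sqrt_add _
  · exact absurd (Or.inr h₂) hadj
  · exact absurd hadj (not_or.2 ⟨h₁, h₂⟩)
  · simp

lemma u_div_pow_eq {α : ℝ} (hα : 0 ≤ α) (n : ℕ) :
    u α n / α ^ n = (((√α)⁻¹ • jacobiM α (n + 1)) ^ (2 * n)) 0 0 := by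
  rw [u, smul_pow, Matrix.smul_apply, smul_eq_mul, inv_pow, pow_mul √α, Real.sq_sqrt hα,
    div_eq_inv_mul]

theorem u_div_pow_tendsto_catalan (n : ℕ) :
    Tendsto (fun α : ℝ => u α n / α ^ n) atTop (nhds (catalan n : ℝ)) := by
  have hcont : Continuous fun M : Matrix (Fin (n + 1)) (Fin (n + 1)) ℝ => (M ^ (2 * n)) 0 0 :=
    (continuous_pow (2 * n)).matrix_elem 0 0
  have hlim := (hcont.tendsto _).comp (tendsto_inv_sqrt_smul_jacobiM (n + 1))
  rw [pathGraph_adjMatrix_pow_apply_zero 0 (by simp), Fin.val_zero,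
    halfLineWalks_two_mul_zero] at hlim
  refine hlim.congr' ?_
  filter_upwards [eventually_ge_atTop 0] with α hα
  exact (u_div_pow_eq hα n).symm
end
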